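/- arXiv:1503.02207 — 7 statements merged into one kernel-verified Lean document; each statement's English description precedes it below -/
import Mathlib

section
/- Let q be a prime power, ℓ ≤ m be positive integers, and 1 ≤ t ≤ ℓ. For every F ∈ Mat_{ℓ×m}(F_q), the integer q − 1 divides the number of matrices M ∈ Mat_{ℓ×m}(F_q) with rank(M) ≤ t and trace(Fᵀ M) ≠ 0. In particular, every codeword of the determinantal code C(t;ℓ,m) has Hamming weight divisible by q − 1. -/
open Matrix

lemma rank_smul_le {K : Type*} [Field K] {ℓ m : ℕ} (c : K) (M : Matrix (Fin ℓ) (Fin m) K) :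
    (c • M).rank ≤ M.rank := by
  have h : c • M = (c • (1 : Matrix (Fin ℓ) (Fin ℓ) K)) * M := by
    rw [Matrix.smul_mul, Matrix.one_mul]
  rw [h]
  exact Matrix.rank_mul_le_right _ _

/-- Every weight of the determinantal code `C(t; ℓ, m)` is divisible by `q - 1`: for every
coefficient matrix `F`, the number of matrices `M` of rank at most `t` with
`trace (Fᵀ * M) ≠ 0` is divisible by `q - 1`. -/
theorem det_code_weight_dvd (K : Type*) [Field K] [Fintype K] (q ℓ m t : ℕ)
    (hq : Fintype.card K = q) (hℓ : 0 < ℓ) (hℓm : ℓ ≤ m) (ht1 : 1 ≤ t) (htℓ : t ≤ ℓ) :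
    ∀ F : Matrix (Fin ℓ) (Fin m) K,
      (q - 1) ∣
        Nat.card {M : Matrix (Fin ℓ) (Fin m) K // M.rank ≤ t ∧ Matrix.trace (Fᵀ * M) ≠ 0} := by
  intro F
  classical
  -- Bijection with Kˣ × {M // rank ≤ t ∧ trace = 1}
  let S := {M : Matrix (Fin ℓ) (Fin m) K // M.rank ≤ t ∧ Matrix.trace (Fᵀ * M) ≠ 0}
  let T := {M : Matrix (Fin ℓ) (Fin m) K // M.rank ≤ t ∧ Matrix.trace (Fᵀ * M) = 1}
  have e : S ≃ Kˣ × T := by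
    refine
      { toFun := fun M =>
          (Units.mk0 (Matrix.trace (Fᵀ * M.1)) M.2.2,
            ⟨(Matrix.trace (Fᵀ * M.1))⁻¹ • M.1, ?_, ?_⟩)
        invFun := fun p => ⟨(p.1 : K) • p.2.1, ?_, ?_⟩
        left_inv := ?_
        right_inv := ?_ }
    · exact le_trans (rank_smul_le _ _) M.2.1
    · rw [Matrix.mul_smul, Matrix.trace_smul, smul_eq_mul, inv_mul_cancel₀ M.2.2]
    · exact le_trans (rank_smul_le _ _) p.2.2.1
    · rw [Matrix.mul_smul, Matrix.trace_smul, p.2.2.2, smul_eq_mul, mul_one]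
      exact p.1.ne_zero
    · rintro ⟨M, hM⟩
      apply Subtype.ext
      show (Fᵀ * M).trace • (Fᵀ * M).trace⁻¹ • M = M
      rw [smul_smul, mul_inv_cancel₀ hM.2, one_smul]
    · rintro ⟨c, M, hM⟩
      have htr : Matrix.trace (Fᵀ * ((c : K) • M)) = (c : K) := by
        rw [Matrix.mul_smul, Matrix.trace_smul, hM.2, smul_eq_mul, mul_one]
      simp only [Prod.mk.injEq, Subtype.mk.injEq]
      constructor
      · exact Units.ext htr
      · apply Subtype.ext
        show (Fᵀ * ((c : K) • M)).trace⁻¹ • (c : K) • M = M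
        rw [htr, smul_smul, inv_mul_cancel₀ c.ne_zero, one_smul]
  rw [Nat.card_congr e, Nat.card_prod, Nat.card_eq_fintype_card, Fintype.card_units, hq]
  exact Dvd.intro _ rfl
end

section
/- Let q be a prime power, ℓ ≤ m be positive integers, and 1 ≤ t ≤ ℓ. If F, F' ∈ Mat_{ℓ×m}(F_q) have the same rank, then the number of matrices M ∈ Mat_{ℓ×m}(F_q) with rank(M) ≤ t and trace(Fᵀ M) ≠ 0 equals the number of matrices M ∈ Mat_{ℓ×m}(F_q) with rank(M) ≤ t and trace(F'ᵀ M) ≠ 0. In other words, the Hamming weight of a codeword of the determinantal code C(t;ℓ,m) depends only on the rank of the coefficient matrix of the corresponding linear form. -/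
/-!
Matrices of the same rank are equivalent: `F' = P * F * Q` with `P`, `Q` invertible (the two
linear maps differ by automorphisms of source and target, matching kernels first and then ranges).
The substitution `M ↦ Pᵀ * M * Qᵀ` preserves rank, and by cyclicity of the trace
`trace (F'ᵀ * M) = trace (Fᵀ * (Pᵀ * M * Qᵀ))`, so it maps one set of matrices bijectively onto
the other.
-/

open Matrix

namespace LinearMap

open Module

variable {K V W : Type*} [Field K] [AddCommGroup V] [Module K V] [AddCommGroup W] [Module K W]

theorem exists_linearEquiv_comp_eq_of_ker_eq [FiniteDimensional K W] {f g : V →ₗ[K] W}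
    (h : ker f = ker g) : ∃ e : W ≃ₗ[K] W, g = e.toLinearMap ∘ₗ f := by
  let ψ : range f ≃ₗ[K] range g :=
    f.quotKerEquivRange.symm ≪≫ₗ Submodule.quotEquivOfEq _ _ h ≪≫ₗ g.quotKerEquivRange
  obtain ⟨e, he⟩ := Submodule.exists_linearEquiv_restrict_eq ψ
  refine ⟨e, LinearMap.ext fun x => ?_⟩
  simpa [ψ, quotKerEquivRange_symm_apply_image] using he ⟨f x, mem_range_self f x⟩

theorem exists_linearEquiv_ker_comp_eq [FiniteDimensional K V] {f g : V →ₗ[K] W}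
    (h : finrank K (ker f) = finrank K (ker g)) :
    ∃ e : V ≃ₗ[K] V, ker (f ∘ₗ e.toLinearMap) = ker g := by
  let φ : ker g ≃ₗ[K] ker f := LinearEquiv.ofFinrankEq _ _ h.symm
  obtain ⟨e, he⟩ := Submodule.exists_linearEquiv_restrict_eq φ
  refine ⟨e, (Submodule.eq_of_le_of_finrank_eq (fun x hx => ?_) ?_).symm⟩
  · show f (e x) = 0
    rw [← he ⟨x, hx⟩]
    exact (φ ⟨x, hx⟩).2
  · rw [ker_comp, Submodule.comap_equiv_eq_map_symm, LinearEquiv.finrank_map_eq, h]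

theorem exists_linearEquiv_comp_comp_eq_of_finrank_range_eq [FiniteDimensional K V]
    [FiniteDimensional K W] {f g : V →ₗ[K] W} (h : finrank K (range f) = finrank K (range g)) :
    ∃ (e₁ : W ≃ₗ[K] W) (e₂ : V ≃ₗ[K] V), g = e₁.toLinearMap ∘ₗ f ∘ₗ e₂.toLinearMap := by
  have hker : finrank K (ker f) = finrank K (ker g) := by
    have := f.finrank_range_add_finrank_ker
    have := g.finrank_range_add_finrank_ker
    omega
  obtain ⟨e₂, he₂⟩ := exists_linearEquiv_ker_comp_eq hker
  obtain ⟨e₁, he₁⟩ := exists_linearEquiv_comp_eq_of_ker_eq he₂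
  exact ⟨e₁, e₂, he₁⟩

end LinearMap

namespace Matrix

variable {K R m n : Type*} [Fintype m] [Fintype n] [DecidableEq m] [DecidableEq n]

theorem exists_isUnit_mul_mul_eq_of_rank_eq [Field K] {A B : Matrix m n K}
    (h : A.rank = B.rank) :
    ∃ (P : Matrix m m K) (Q : Matrix n n K), IsUnit P ∧ IsUnit Q ∧ B = P * A * Q := by
  obtain ⟨e₁, e₂, he⟩ :=
    LinearMap.exists_linearEquiv_comp_comp_eq_of_finrank_range_eq (f := A.mulVecLin) h
  refine ⟨LinearMap.toMatrix' e₁.toLinearMap, LinearMap.toMatrix' e₂.toLinearMap,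
    LinearMap.isUnit_toMatrix'_iff.mpr (Module.End.isUnit_iff _ |>.mpr e₁.bijective),
    LinearMap.isUnit_toMatrix'_iff.mpr (Module.End.isUnit_iff _ |>.mpr e₂.bijective), ?_⟩
  apply toLin'.injective
  rw [toLin'_mul, toLin'_mul, toLin'_toMatrix', toLin'_toMatrix']
  exact he

variable [CommRing R]

@[simps apply]
def unitsMulMulEquiv (P : (Matrix m m R)ˣ) (Q : (Matrix n n R)ˣ) :
    Matrix m n R ≃ Matrix m n R where
  toFun M := (P : Matrix m m R) * M * (Q : Matrix n n R)
  invFun M := (↑P⁻¹ : Matrix m m R) * M * (↑Q⁻¹ : Matrix n n R)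
  left_inv M := by simp [← Matrix.mul_assoc]
  right_inv M := by simp [← Matrix.mul_assoc]

theorem rank_units_mul_mul (P : (Matrix m m R)ˣ) (Q : (Matrix n n R)ˣ) (M : Matrix m n R) :
    ((P : Matrix m m R) * M * (Q : Matrix n n R)).rank = M.rank := by
  rw [rank_mul_eq_left_of_isUnit_det _ _ ((isUnit_iff_isUnit_det _).mp Q.isUnit),
    rank_mul_eq_right_of_isUnit_det _ _ ((isUnit_iff_isUnit_det _).mp P.isUnit)]

theorem card_rank_le_trace_mul_ne_zero_mul_mul (F : Matrix m n R) {P : Matrix m m R}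
    {Q : Matrix n n R} (hP : IsUnit P) (hQ : IsUnit Q) (t : ℕ) :
    Nat.card {M : Matrix m n R // M.rank ≤ t ∧ trace ((P * F * Q)ᵀ * M) ≠ 0} =
      Nat.card {M : Matrix m n R // M.rank ≤ t ∧ trace (Fᵀ * M) ≠ 0} := by
  obtain ⟨P', hP'⟩ := (isUnit_transpose P).mpr hP
  obtain ⟨Q', hQ'⟩ := (isUnit_transpose Q).mpr hQ
  refine Nat.card_congr (Equiv.subtypeEquiv (unitsMulMulEquiv P' Q') fun M => ?_)
  have htrace : trace ((P * F * Q)ᵀ * M) = trace (Fᵀ * unitsMulMulEquiv P' Q' M) := by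
    rw [unitsMulMulEquiv_apply, hP', hQ', transpose_mul, transpose_mul, Matrix.mul_assoc,
      trace_mul_comm]
    simp only [Matrix.mul_assoc]
  rw [htrace, unitsMulMulEquiv_apply, rank_units_mul_mul]

end Matrix

theorem det_code_weight_rank_invariant_general (K : Type*) [Field K] (ℓ m t : ℕ)
    (F F' : Matrix (Fin ℓ) (Fin m) K) (hrk : F.rank = F'.rank) :
    Nat.card {M : Matrix (Fin ℓ) (Fin m) K // M.rank ≤ t ∧ Matrix.trace (Fᵀ * M) ≠ 0} =
      Nat.card {M : Matrix (Fin ℓ) (Fin m) K // M.rank ≤ t ∧ Matrix.trace (F'ᵀ * M) ≠ 0} := by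
  obtain ⟨P, Q, hP, hQ, rfl⟩ := exists_isUnit_mul_mul_eq_of_rank_eq hrk
  exact (card_rank_le_trace_mul_ne_zero_mul_mul F hP hQ t).symm

/-- The Hamming weight of a codeword of the determinantal code `C(t; ℓ, m)` depends only on
the rank of the coefficient matrix: if `F` and `F'` have the same rank, then the number of
matrices `M` of rank at most `t` with `trace (Fᵀ * M) ≠ 0` is the same for `F` and `F'`. -/
theorem det_code_weight_rank_invariant (K : Type*) [Field K] [Fintype K] (q ℓ m t : ℕ)
    (hq : Fintype.card K = q) (hℓ : 0 < ℓ) (hℓm : ℓ ≤ m) (ht1 : 1 ≤ t) (htℓ : t ≤ ℓ)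
    (F F' : Matrix (Fin ℓ) (Fin m) K) (hrk : F.rank = F'.rank) :
    Nat.card {M : Matrix (Fin ℓ) (Fin m) K // M.rank ≤ t ∧ Matrix.trace (Fᵀ * M) ≠ 0} =
      Nat.card {M : Matrix (Fin ℓ) (Fin m) K // M.rank ≤ t ∧ Matrix.trace (F'ᵀ * M) ≠ 0} :=
  det_code_weight_rank_invariant_general K ℓ m t F F' hrk
end

section
/- Let q be a prime power, ℓ ≤ m be positive integers, and 1 ≤ r ≤ ℓ. The number of matrices M ∈ Mat_{ℓ×m}(F_q) with rank(M) = 1 and M_{11} + M_{22} + ⋯ + M_{rr} ≠ 0 equals q^{ℓ+m−r−1}(q^r − 1). -/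
/-!
A rank-one matrix is `vecMulVec u v` with `u, v ≠ 0`, and the pair `(u, v)` is unique up to
`(c • u, c⁻¹ • v)` with `c ∈ Kˣ`. Its partial trace is the dot product of the first `r`
coordinates of `u` and `v`. So `q - 1` times the count is the number of pairs with that dot
product nonzero: `u` must not vanish on the first `r` coordinates (`q ^ ℓ - q ^ (ℓ - r)` choices),
and then `v` must avoid the kernel of a nonzero linear form (`q ^ m - q ^ (m - 1)` choices).
-/

open Matrix Module

namespace Matrix

theorem exists_units_smul_of_vecMulVec_eq {K m n : Type*} [Field K] {u u₀ : m → K}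
    {v v₀ : n → K}
    (h : vecMulVec u v = vecMulVec u₀ v₀) (hu₀ : u₀ ≠ 0) (hv₀ : v₀ ≠ 0) :
    ∃ c : Kˣ, c • u₀ = u ∧ c⁻¹ • v₀ = v := by
  obtain ⟨i, hi⟩ : ∃ i, u₀ i ≠ 0 := Function.ne_iff.mp hu₀
  obtain ⟨j, hj⟩ : ∃ j, v₀ j ≠ 0 := Function.ne_iff.mp hv₀
  have h' : ∀ k l, u k * v l = u₀ k * v₀ l := fun k l => congrFun (congrFun h k) l
  have hvj : v j ≠ 0 := right_ne_zero_of_mul (h' i j ▸ mul_ne_zero hi hj)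
  refine ⟨Units.mk0 (v₀ j / v j) (div_ne_zero hj hvj), funext fun k => ?_, funext fun l => ?_⟩
  · simp only [Pi.smul_apply, Units.smul_def, Units.val_mk0, smul_eq_mul]
    field_simp
    linear_combination -h' k j
  · have hi' : u₀ i * (v₀ j * v l - v j * v₀ l) = 0 := by
      linear_combination v j * h' i l - v l * h' i j
    simp only [Pi.smul_apply, Units.smul_def, Units.val_inv_eq_inv_val, Units.val_mk0, inv_div,
      smul_eq_mul]
    field_simp
    linear_combination -(mul_eq_zero.mp hi').resolve_left hi

theorem trace_submatrix_vecMulVec {R ι m n : Type*} [CommSemiring R] [Fintype ι] (u : m → R)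
    (v : n → R) (σ : ι → m) (τ : ι → n) :
    ((vecMulVec u v).submatrix σ τ).trace = (u ∘ σ) ⬝ᵥ (v ∘ τ) :=
  trace_vecMulVec (u ∘ σ) (v ∘ τ)

variable {K m n : Type*} [Field K] [Fintype m] [Fintype n]

theorem rank_vecMulVec_eq_one {u : m → K} {v : n → K} (hu : u ≠ 0) (hv : v ≠ 0) :
    (vecMulVec u v).rank = 1 := by
  refine le_antisymm (rank_vecMulVec_le u v) (Nat.one_le_iff_ne_zero.mpr ?_)
  obtain ⟨j, hj⟩ := Function.ne_iff.mp hv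
  rw [rank_eq_finrank_span_cols, Ne, Submodule.finrank_eq_zero, Submodule.span_eq_bot]
  refine fun h => hu (funext fun i => ?_)
  have := congrFun (h _ ⟨j, rfl⟩) i
  simp_all [vecMulVec_apply]

theorem exists_vecMulVec_eq_of_rank_eq_one {A : Matrix m n K} (hA : A.rank = 1) :
    ∃ (u : m → K) (v : n → K), vecMulVec u v = A := by
  rw [rank_eq_finrank_span_cols, finrank_eq_one_iff'] at hA
  obtain ⟨u, -, hu⟩ := hA
  choose v hv using fun j => hu ⟨A.col j, Submodule.subset_span ⟨j, rfl⟩⟩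
  refine ⟨u, v, ?_⟩
  ext i j
  simpa [vecMulVec_apply, mul_comm] using congrFun (congrArg Subtype.val (hv j)) i

theorem natCard_vecMulVec_fiber {A : Matrix m n K} (hA : A.rank = 1) :
    Nat.card {p : (m → K) × (n → K) // vecMulVec p.1 p.2 = A} = Nat.card Kˣ := by
  obtain ⟨u₀, v₀, rfl⟩ := exists_vecMulVec_eq_of_rank_eq_one hA
  have hA₀ : vecMulVec u₀ v₀ ≠ 0 := by rintro h; simp [h] at hA
  have hu₀ : u₀ ≠ 0 := by rintro rfl; exact hA₀ (zero_vecMulVec v₀)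
  have hv₀ : v₀ ≠ 0 := by rintro rfl; exact hA₀ (by ext; simp [vecMulVec_apply])
  have hmem (c : Kˣ) : vecMulVec (c • u₀) (c⁻¹ • v₀) = vecMulVec u₀ v₀ := by
    rw [smul_vecMulVec, vecMulVec_smul, smul_smul, mul_inv_cancel, one_smul]
  refine (Nat.card_congr (Equiv.ofBijective
    (fun c : Kˣ => ⟨(c • u₀, c⁻¹ • v₀), hmem c⟩) ⟨fun c c' hc => ?_, ?_⟩)).symm
  · refine Units.ext (smul_left_injective K hu₀ ?_)
    simpa only [Units.smul_def] using congrArg (·.1.1) hc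
  · rintro ⟨⟨u, v⟩, h⟩
    obtain ⟨c, rfl, rfl⟩ := exists_units_smul_of_vecMulVec_eq h hu₀ hv₀
    exact ⟨c, rfl⟩

end Matrix

section Counting

variable {K : Type*} [Field K]

theorem LinearMap.natCard_apply_ne_zero {V W : Type*} [AddCommGroup V] [Module K V] [Finite V]
    [AddCommGroup W] [Module K W] (φ : V →ₗ[K] W) (hφ : Function.Surjective φ) :
    Nat.card {v // φ v ≠ 0} =
      Nat.card K ^ finrank K V - Nat.card K ^ (finrank K V - finrank K W) := by
  classical
  have : Fintype V := Fintype.ofFinite V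
  have hker : Nat.card (LinearMap.ker φ) = Nat.card K ^ (finrank K V - finrank K W) := by
    rw [natCard_eq_pow_finrank (K := K)]
    have := φ.finrank_range_add_finrank_ker
    rw [LinearMap.range_eq_top.mpr hφ, finrank_top] at this
    rw [← this, Nat.add_sub_cancel_left]
  rw [← natCard_eq_pow_finrank (K := K) (V := V), ← hker]
  simp only [Nat.card_eq_fintype_card]
  exact Fintype.card_subtype_compl _

variable {ι m n : Type*} [Fintype ι] [Fintype m] [Fintype n]

theorem natCard_comp_ne_zero [Finite K] {σ : ι → m} (hσ : σ.Injective) :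
    Nat.card {u : m → K // u ∘ σ ≠ 0} =
      Nat.card K ^ Fintype.card m - Nat.card K ^ (Fintype.card m - Fintype.card ι) := by
  have := (LinearMap.funLeft K K σ).natCard_apply_ne_zero
    (LinearMap.funLeft_surjective_of_injective K K σ hσ)
  rwa [finrank_fintype_fun_eq_card, finrank_fintype_fun_eq_card] at this

theorem natCard_dotProduct_comp_ne_zero [Finite K] {a : ι → K} (ha : a ≠ 0) {τ : ι → n}
    (hτ : τ.Injective) :
    Nat.card {v : n → K // a ⬝ᵥ (v ∘ τ) ≠ 0} =
      Nat.card K ^ Fintype.card n - Nat.card K ^ (Fintype.card n - 1) := by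
  classical
  obtain ⟨i, hi⟩ : ∃ i, a i ≠ 0 := Function.ne_iff.mp ha
  have hdot : Function.Surjective (dotProductBilin K K a) := fun c =>
    ⟨Pi.single i (c / a i), by simp [dotProduct_single, mul_div_cancel₀ _ hi]⟩
  have := (dotProductBilin K K a ∘ₗ LinearMap.funLeft K K τ).natCard_apply_ne_zero
    (hdot.comp (LinearMap.funLeft_surjective_of_injective K K τ hτ))
  rwa [finrank_fintype_fun_eq_card, finrank_self] at this

theorem natCard_dotProduct_comp_comp_ne_zero [Finite K] {σ : ι → m} (hσ : σ.Injective)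
    {τ : ι → n} (hτ : τ.Injective) :
    Nat.card {p : (m → K) × (n → K) // (p.1 ∘ σ) ⬝ᵥ (p.2 ∘ τ) ≠ 0} =
      (Nat.card K ^ Fintype.card m - Nat.card K ^ (Fintype.card m - Fintype.card ι)) *
        (Nat.card K ^ Fintype.card n - Nat.card K ^ (Fintype.card n - 1)) := by
  classical
  have : Fintype K := Fintype.ofFinite K
  have hfiber (u : m → K) : Nat.card {v : n → K // (u ∘ σ) ⬝ᵥ (v ∘ τ) ≠ 0} =
      if u ∘ σ = 0 then 0 else
        Nat.card K ^ Fintype.card n - Nat.card K ^ (Fintype.card n - 1) := by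
    split_ifs with hu
    · simp [hu]
    · exact natCard_dotProduct_comp_ne_zero hu hτ
  rw [Nat.card_congr (Equiv.subtypeProdEquivSigmaSubtype
    fun (u : m → K) (v : n → K) => (u ∘ σ) ⬝ᵥ (v ∘ τ) ≠ 0), Nat.card_sigma,
    Finset.sum_congr rfl fun u _ => hfiber u, Finset.sum_ite, Finset.sum_const_zero,
    Finset.sum_const, zero_add, smul_eq_mul, ← natCard_comp_ne_zero hσ,
    Nat.card_eq_fintype_card (α := {u // _}), Fintype.card_subtype]

theorem natCard_rank_eq_one_trace_submatrix_ne_zero_mul [Finite K] (σ : ι → m) (τ : ι → n) :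
    Nat.card {A : Matrix m n K // A.rank = 1 ∧ (A.submatrix σ τ).trace ≠ 0} * Nat.card Kˣ =
      Nat.card {p : (m → K) × (n → K) // (p.1 ∘ σ) ⬝ᵥ (p.2 ∘ τ) ≠ 0} := by
  classical
  have : Fintype K := Fintype.ofFinite K
  have hpair (p : (m → K) × (n → K)) : (p.1 ∘ σ) ⬝ᵥ (p.2 ∘ τ) ≠ 0 ↔
      (vecMulVec p.1 p.2).rank = 1 ∧ ((vecMulVec p.1 p.2).submatrix σ τ).trace ≠ 0 := by
    rw [trace_submatrix_vecMulVec]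
    refine ⟨fun h => ⟨rank_vecMulVec_eq_one ?_ ?_, h⟩, And.right⟩
    · rintro hu; simp [hu] at h
    · rintro hv; simp [hv] at h
  rw [← Nat.card_congr (Equiv.sigmaSubtypeFiberEquivSubtype (fun p : (m → K) × (n → K) =>
      vecMulVec p.1 p.2) (q := fun A => A.rank = 1 ∧ (A.submatrix σ τ).trace ≠ 0) hpair),
    Nat.card_sigma, Finset.sum_congr rfl fun A _ => natCard_vecMulVec_fiber A.2.1,
    Finset.sum_const, smul_eq_mul, Finset.card_univ,
    Nat.card_eq_fintype_card (α := {A // _})]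

end Counting

theorem Nat.pow_sub_pow_mul_pow_sub_pow (q : ℕ) {ℓ m r : ℕ} (hrℓ : r ≤ ℓ) (hℓm : ℓ ≤ m) :
    (q ^ ℓ - q ^ (ℓ - r)) * (q ^ m - q ^ (m - 1)) =
      q ^ (ℓ + m - r - 1) * (q ^ r - 1) * (q - 1) := by
  have hfactor (a b : ℕ) (hba : b ≤ a) : q ^ a - q ^ (a - b) = q ^ (a - b) * (q ^ b - 1) := by
    rw [Nat.mul_sub, mul_one, ← pow_add, Nat.sub_add_cancel hba]
  rcases Nat.eq_zero_or_pos r with rfl | hr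
  · simp
  rw [hfactor ℓ r hrℓ, hfactor m 1 (by omega), pow_one,
    show ℓ + m - r - 1 = ℓ - r + (m - 1) by omega, pow_add]
  ring

theorem count_rank_one_partial_trace_ne_zero_general (K : Type*) [Field K] [Fintype K] (q ℓ m r : ℕ)
    (hq : Fintype.card K = q) (hℓm : ℓ ≤ m) (hrℓ : r ≤ ℓ) :
    Nat.card {M : Matrix (Fin ℓ) (Fin m) K // M.rank = 1 ∧
      ∑ i : Fin r, M (Fin.castLE hrℓ i) (Fin.castLE (hrℓ.trans hℓm) i) ≠ 0} =
      q ^ (ℓ + m - r - 1) * (q ^ r - 1) := by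
  have hK : Nat.card K = q := Nat.card_eq_fintype_card.trans hq
  have hq1 : 0 < q - 1 := by have := hq ▸ Fintype.one_lt_card (α := K); omega
  have key := natCard_rank_eq_one_trace_submatrix_ne_zero_mul (K := K)
    (Fin.castLE hrℓ) (Fin.castLE (hrℓ.trans hℓm))
  rw [natCard_dotProduct_comp_comp_ne_zero (Fin.castLE_injective _) (Fin.castLE_injective _),
    Nat.card_units, hK, Fintype.card_fin, Fintype.card_fin, Fintype.card_fin,
    Nat.pow_sub_pow_mul_pow_sub_pow q hrℓ hℓm] at key
  exact Nat.eq_of_mul_eq_mul_right hq1 key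

/-- The number of rank-one `ℓ × m` matrices over a finite field with `q` elements whose `r`-th
partial trace `M 1 1 + ⋯ + M r r` is nonzero equals `q ^ (ℓ + m - r - 1) * (q ^ r - 1)`. -/
theorem count_rank_one_partial_trace_ne_zero (K : Type*) [Field K] [Fintype K] (q ℓ m r : ℕ)
    (hq : Fintype.card K = q) (hℓ : 0 < ℓ) (hℓm : ℓ ≤ m) (hr1 : 1 ≤ r) (hrℓ : r ≤ ℓ) :
    Nat.card {M : Matrix (Fin ℓ) (Fin m) K // M.rank = 1 ∧
      ∑ i : Fin r, M (Fin.castLE hrℓ i) (Fin.castLE (hrℓ.trans hℓm) i) ≠ 0} =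
      q ^ (ℓ + m - r - 1) * (q ^ r - 1) :=
  count_rank_one_partial_trace_ne_zero_general K q ℓ m r hq hℓm hrℓ
end

section
/- Let q be a prime power, ℓ ≤ m be positive integers, and let F ∈ Mat_{ℓ×m}(F_q) have rank(F) = r with 1 ≤ r ≤ ℓ. Then the number of matrices M ∈ Mat_{ℓ×m}(F_q) with rank(M) = 1 and trace(Fᵀ M) ≠ 0 equals q^{ℓ+m−r−1}(q^r − 1). In particular, these ℓ values for r = 1, …, ℓ are strictly increasing in r, so the determinantal code C(1;ℓ,m) has exactly ℓ distinct nonzero weights. -/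
/-!
A rank-one matrix is `vecMulVec x y` with `x, y ≠ 0`, and the pairs giving the same matrix form a
single free orbit `(c • x, c⁻¹ • y)` of `Kˣ`, so pairs overcount by a factor of exactly `q - 1`.
Since `trace (Fᵀ * vecMulVec x y) = (Fᵀ *ᵥ x) ⬝ᵥ y`, a pair counts when `x` avoids the kernel of
`Fᵀ` (`q ^ ℓ - q ^ (ℓ - r)` choices) and `y` avoids the hyperplane orthogonal to `Fᵀ *ᵥ x`
(`q ^ m - q ^ (m - 1)` choices).
-/

open Matrix Finset Module

theorem Nat.pow_mul_pow_sub_one (q a b : ℕ) : q ^ a * (q ^ b - 1) = q ^ (a + b) - q ^ a := by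
  rw [Nat.mul_sub, mul_one, pow_add]

theorem Nat.pow_sub_mul_pow_sub_one_lt {q N r₁ r₂ : ℕ} (hq : 1 < q) (h : r₁ < r₂) (hN : r₂ ≤ N) :
    q ^ (N - r₁) * (q ^ r₁ - 1) < q ^ (N - r₂) * (q ^ r₂ - 1) := by
  rw [Nat.pow_mul_pow_sub_one, Nat.pow_mul_pow_sub_one, Nat.sub_add_cancel (by omega),
    Nat.sub_add_cancel hN]
  have hlt : q ^ (N - r₂) < q ^ (N - r₁) := Nat.pow_lt_pow_right hq (by omega)
  have hle : q ^ (N - r₁) ≤ q ^ N := Nat.pow_le_pow_right (by omega) (by omega)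
  omega

section FiniteField

variable {K V W : Type*} [Field K] [Fintype K] [AddCommGroup V] [Module K V] [Fintype V]
  [AddCommGroup W] [Module K W] [DecidableEq W]

theorem LinearMap.card_filter_ne_zero (f : V →ₗ[K] W) :
    #{v | f v ≠ 0} =
      Fintype.card K ^ finrank K (ker f) * (Fintype.card K ^ finrank K (range f) - 1) := by
  have hker : #{v | f v = 0} = Fintype.card K ^ finrank K (ker f) := by
    rw [← Fintype.card_subtype, ← Nat.card_eq_fintype_card, ← Nat.card_eq_fintype_card,
      ← natCard_eq_pow_finrank]
    exact Nat.card_congr (Equiv.subtypeEquivRight fun v => LinearMap.mem_ker.symm)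
  rw [Nat.pow_mul_pow_sub_one, ← hker, add_comm, f.finrank_range_add_finrank_ker,
    ← card_eq_pow_finrank, ← Finset.card_univ]
  exact eq_tsub_of_add_eq ((add_comm _ _).trans (card_filter_add_card_filter_not _))

theorem Module.Dual.card_filter_ne_zero [DecidableEq K] {φ : Dual K V} (hφ : φ ≠ 0) :
    #{v | φ v ≠ 0} = Fintype.card K ^ (finrank K V - 1) * (Fintype.card K - 1) := by
  rw [LinearMap.card_filter_ne_zero, range_eq_top_of_ne_zero hφ, finrank_top,
    finrank_self, pow_one, ← finrank_ker_add_one_of_ne_zero hφ, Nat.add_sub_cancel]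

end FiniteField

namespace Matrix

variable {K m n : Type*} [Field K]

theorem vecMulVec_eq_vecMulVec_iff {x₀ x : m → K} {y₀ y : n → K} (h : vecMulVec x₀ y₀ ≠ 0) :
    vecMulVec x y = vecMulVec x₀ y₀ ↔ ∃ c : Kˣ, c • x₀ = x ∧ c⁻¹ • y₀ = y := by
  constructor
  · intro hxy
    have hentry : ∀ i j, x i * y j = x₀ i * y₀ j := fun i j => by
      simpa only [vecMulVec_apply] using congrFun (congrFun hxy i) j
    obtain ⟨i, j, hij⟩ : ∃ i j, x₀ i * y₀ j ≠ 0 := by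
      by_contra! h0
      exact h (ext h0)
    have hxi : x i ≠ 0 := left_ne_zero_of_mul (hentry i j ▸ hij)
    have hx₀i : x₀ i ≠ 0 := left_ne_zero_of_mul hij
    have hyj : y j ≠ 0 := right_ne_zero_of_mul (hentry i j ▸ hij)
    refine ⟨Units.mk0 (x i / x₀ i) (div_ne_zero hxi hx₀i), funext fun k => ?_, funext fun l => ?_⟩
    · simp only [Units.smul_def, Units.val_mk0, Pi.smul_apply, smul_eq_mul]
      field_simp
      apply mul_right_cancel₀ hyj
      linear_combination x₀ k * hentry i j - x₀ i * hentry k j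
    · simp only [Units.smul_def, Units.val_inv_eq_inv_val, Units.val_mk0, inv_div, Pi.smul_apply,
        smul_eq_mul]
      field_simp
      linear_combination -hentry i l
  · rintro ⟨c, rfl, rfl⟩
    rw [smul_vecMulVec, vecMulVec_smul, smul_smul, mul_inv_cancel, one_smul]

variable [Fintype n]

theorem rank_eq_zero_iff {A : Matrix m n K} : A.rank = 0 ↔ A = 0 := by
  classical
  refine ⟨fun h => ?_, fun h => h ▸ rank_zero⟩
  rw [rank, Submodule.finrank_eq_zero, LinearMap.range_eq_bot] at h
  ext i j
  simpa [mulVec_single_one] using congrFun (LinearMap.congr_fun h (Pi.single j 1)) i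

theorem rank_vecMulVec_eq_one_s7 {x : m → K} {y : n → K} (h : vecMulVec x y ≠ 0) :
    (vecMulVec x y).rank = 1 :=
  le_antisymm (rank_vecMulVec_le x y) (Nat.one_le_iff_ne_zero.2 (rank_eq_zero_iff.not.2 h))

theorem exists_eq_vecMulVec_of_rank_eq_one {M : Matrix m n K} (h : M.rank = 1) :
    ∃ (x : m → K) (y : n → K), M = vecMulVec x y := by
  classical
  obtain ⟨⟨v, _⟩, _, hspan⟩ := finrank_eq_one_iff'.1 h
  choose c hc using fun j => hspan ⟨M *ᵥ Pi.single j 1, LinearMap.mem_range_self _ _⟩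
  refine ⟨v, c, ?_⟩
  ext i j
  have hcol := congrFun (congrArg Subtype.val (hc j)) i
  simp only [SetLike.val_smul, Pi.smul_apply, smul_eq_mul, mulVec_single_one, col_apply] at hcol
  rw [vecMulVec_apply, ← hcol, mul_comm]

variable [Fintype m]

theorem trace_mul_vecMulVec (A : Matrix n m K) (x : m → K) (y : n → K) :
    trace (A * vecMulVec x y) = A *ᵥ x ⬝ᵥ y := by
  rw [mul_vecMulVec, trace_vecMulVec]

variable [DecidableEq n] [Fintype K] [DecidableEq K]

theorem card_filter_mulVec_ne_zero (A : Matrix m n K) :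
    #{x | A *ᵥ x ≠ 0} =
      Fintype.card K ^ (Fintype.card n - A.rank) * (Fintype.card K ^ A.rank - 1) := by
  have hnullity : A.rank + finrank K (LinearMap.ker A.mulVecLin) = Fintype.card n := by
    rw [← finrank_fintype_fun_eq_card K]
    exact A.mulVecLin.finrank_range_add_finrank_ker
  refine (LinearMap.card_filter_ne_zero A.mulVecLin).trans ?_
  rw [← hnullity, Nat.add_sub_cancel_left]
  rfl

variable [DecidableEq m]

theorem card_filter_mulVec_dotProduct_ne_zero (A : Matrix m n K) :
    #{p : (n → K) × (m → K) | A *ᵥ p.1 ⬝ᵥ p.2 ≠ 0} =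
      Fintype.card K ^ (Fintype.card n - A.rank) * (Fintype.card K ^ A.rank - 1) *
        (Fintype.card K ^ (Fintype.card m - 1) * (Fintype.card K - 1)) := by
  have hfiber (x : n → K) : #{y | A *ᵥ x ⬝ᵥ y ≠ 0} =
      if A *ᵥ x ≠ 0 then Fintype.card K ^ (Fintype.card m - 1) * (Fintype.card K - 1) else 0 := by
    split_ifs with hx
    · have hφ : dotProductBilin K K (A *ᵥ x) ≠ 0 := fun h0 =>
        hx (dotProduct_eq_zero _ fun y => LinearMap.congr_fun h0 y)
      exact (Dual.card_filter_ne_zero hφ).trans (by rw [finrank_fintype_fun_eq_card])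
    · rw [not_not.1 hx]
      simp
  calc #{p : (n → K) × (m → K) | A *ᵥ p.1 ⬝ᵥ p.2 ≠ 0}
      = ∑ x, #{y | A *ᵥ x ⬝ᵥ y ≠ 0} := by
        rw [card_filter, Fintype.sum_prod_type]
        simp only [card_filter]
    _ = ∑ x with A *ᵥ x ≠ 0, Fintype.card K ^ (Fintype.card m - 1) * (Fintype.card K - 1) := by
        rw [sum_filter]
        exact sum_congr rfl fun x _ => hfiber x
    _ = _ := by rw [sum_const, smul_eq_mul, card_filter_mulVec_ne_zero]

theorem card_filter_vecMulVec_eq {M : Matrix m n K} (hM : M.rank = 1) :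
    #{p : (m → K) × (n → K) | vecMulVec p.1 p.2 = M} = Fintype.card K - 1 := by
  obtain ⟨x₀, y₀, rfl⟩ := exists_eq_vecMulVec_of_rank_eq_one hM
  have hM0 : vecMulVec x₀ y₀ ≠ 0 := fun h0 => by simp [h0] at hM
  have hx₀ : x₀ ≠ 0 := by rintro rfl; simp at hM0
  have hfiber : ({p | vecMulVec p.1 p.2 = vecMulVec x₀ y₀} : Finset ((m → K) × (n → K))) =
      univ.image fun c : Kˣ => (c • x₀, c⁻¹ • y₀) := by
    ext ⟨x, y⟩
    simp [vecMulVec_eq_vecMulVec_iff hM0]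
  have hinj : Function.Injective fun c : Kˣ => (c • x₀, c⁻¹ • y₀) := fun c c' h =>
    Units.ext (smul_left_injective K hx₀ (congrArg Prod.fst h))
  rw [hfiber, card_image_of_injective _ hinj, card_univ, Fintype.card_units]

theorem card_filter_rank_eq_one_mul (P : Matrix m n K → Prop) [DecidablePred P] (hP : ¬P 0) :
    #{M | M.rank = 1 ∧ P M} * (Fintype.card K - 1) =
      #{p : (m → K) × (n → K) | P (vecMulVec p.1 p.2)} := by
  have hmaps : ∀ p ∈ ({p | P (vecMulVec p.1 p.2)} : Finset ((m → K) × (n → K))),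
      vecMulVec p.1 p.2 ∈ ({M | M.rank = 1 ∧ P M} : Finset (Matrix m n K)) := by
    intro p hp
    rw [mem_filter_univ] at hp ⊢
    exact ⟨rank_vecMulVec_eq_one_s7 fun h0 => hP (h0 ▸ hp), hp⟩
  rw [card_eq_sum_card_fiberwise hmaps, ← smul_eq_mul, ← sum_const]
  refine sum_congr rfl fun M hM => ?_
  rw [mem_filter_univ] at hM
  rw [← card_filter_vecMulVec_eq hM.1, filter_filter]
  congr 1
  exact filter_congr fun p _ => ⟨fun h => ⟨h ▸ hM.2, h⟩, fun h => h.2⟩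

end Matrix

theorem det_code_weights_t_one_general (K : Type*) [Field K] [Fintype K] (q ℓ m r : ℕ)
    (hq : Fintype.card K = q) (hℓm : ℓ ≤ m) (hrℓ : r ≤ ℓ)
    (F : Matrix (Fin ℓ) (Fin m) K) (hF : F.rank = r) :
    Nat.card {M : Matrix (Fin ℓ) (Fin m) K // M.rank = 1 ∧ Matrix.trace (Fᵀ * M) ≠ 0} =
      q ^ (ℓ + m - r - 1) * (q ^ r - 1) ∧
    ∀ r₁ r₂ : ℕ, 1 ≤ r₁ → r₁ < r₂ → r₂ ≤ ℓ →
      q ^ (ℓ + m - r₁ - 1) * (q ^ r₁ - 1) < q ^ (ℓ + m - r₂ - 1) * (q ^ r₂ - 1) := by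
  classical
  have hq1 : 1 < q := hq ▸ Fintype.one_lt_card
  refine ⟨?_, fun r₁ r₂ _ h₁₂ h₂ => ?_⟩
  · have hcount :=
      card_filter_rank_eq_one_mul (fun M : Matrix (Fin ℓ) (Fin m) K => trace (Fᵀ * M) ≠ 0) (by simp)
    simp only [trace_mul_vecMulVec] at hcount
    rw [card_filter_mulVec_dotProduct_ne_zero, rank_transpose, hF, Fintype.card_fin,
      Fintype.card_fin, hq] at hcount
    rw [Nat.card_eq_fintype_card, Fintype.card_subtype]
    refine Nat.eq_of_mul_eq_mul_right (Nat.sub_pos_of_lt hq1) (hcount.trans ?_)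
    rw [show ℓ + m - r - 1 = (ℓ - r) + (m - 1) by omega, pow_add]
    ring
  · rw [Nat.sub_right_comm, Nat.sub_right_comm _ r₂]
    exact Nat.pow_sub_mul_pow_sub_one_lt hq1 h₁₂ (by omega)

/-- If `F` has rank `r` with `1 ≤ r ≤ ℓ`, then the number of rank-one matrices `M` with
`trace (Fᵀ * M) ≠ 0` equals `q ^ (ℓ + m - r - 1) * (q ^ r - 1)`; moreover, these values are
strictly increasing in `r`, so the determinantal code `C(1; ℓ, m)` has exactly `ℓ` distinct
nonzero weights. -/
theorem det_code_weights_t_one (K : Type*) [Field K] [Fintype K] (q ℓ m r : ℕ)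
    (hq : Fintype.card K = q) (hℓ : 0 < ℓ) (hℓm : ℓ ≤ m) (hr1 : 1 ≤ r) (hrℓ : r ≤ ℓ)
    (F : Matrix (Fin ℓ) (Fin m) K) (hF : F.rank = r) :
    Nat.card {M : Matrix (Fin ℓ) (Fin m) K // M.rank = 1 ∧ Matrix.trace (Fᵀ * M) ≠ 0} =
      q ^ (ℓ + m - r - 1) * (q ^ r - 1) ∧
    ∀ r₁ r₂ : ℕ, 1 ≤ r₁ → r₁ < r₂ → r₂ ≤ ℓ →
      q ^ (ℓ + m - r₁ - 1) * (q ^ r₁ - 1) < q ^ (ℓ + m - r₂ - 1) * (q ^ r₂ - 1) :=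
  det_code_weights_t_one_general K q ℓ m r hq hℓm hrℓ F hF
end

section
/- Let F be a field and let u, a, x ∈ F^ℓ and v, b, y ∈ F^m be nonzero vectors such that uᵀv + aᵀb = xᵀy (as ℓ×m matrices). Then the subspace of F^ℓ spanned by u, a, x is one-dimensional, or the subspace of F^m spanned by v, b, y is one-dimensional. -/
open Matrix

/-- Span of three vectors all proportional to a nonzero vector `w` has dimension one. -/
lemma span_three_eq_one {K : Type*} [Field K] {n : ℕ} (w p q r : Fin n → K)
    (hw : w ≠ 0) (hp : ∃ c : K, p = c • w) (hq : ∃ c : K, q = c • w)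
    (hr : ∃ c : K, r = c • w) (hwmem : w ∈ ({p, q, r} : Set (Fin n → K))) :
    Module.finrank K ↥(Submodule.span K ({p, q, r} : Set (Fin n → K))) = 1 := by
  have hspan : Submodule.span K ({p, q, r} : Set (Fin n → K)) = Submodule.span K {w} := by
    apply le_antisymm
    · rw [Submodule.span_le]
      rintro z hz
      simp only [Set.mem_insert_iff, Set.mem_singleton_iff] at hz
      rcases hz with rfl | rfl | rfl
      · obtain ⟨c, rfl⟩ := hp
        exact Submodule.smul_mem _ c (Submodule.mem_span_singleton_self w)
      · obtain ⟨c, rfl⟩ := hq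
        exact Submodule.smul_mem _ c (Submodule.mem_span_singleton_self w)
      · obtain ⟨c, rfl⟩ := hr
        exact Submodule.smul_mem _ c (Submodule.mem_span_singleton_self w)
    · rw [Submodule.span_le]
      rintro z hz
      simp only [Set.mem_singleton_iff] at hz
      subst hz
      exact Submodule.subset_span hwmem
  rw [hspan]
  exact finrank_span_singleton hw

lemma indep_aux {K : Type*} [Field K] {n : ℕ} {u a : Fin n → K}
    (hu : u ≠ 0) (hna : ∀ c : K, a ≠ c • u) {r s : K}
    (h : r • u + s • a = 0) : r = 0 ∧ s = 0 := by
  rcases eq_or_ne s 0 with hs | hs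
  · subst hs
    simp only [zero_smul, add_zero] at h
    rcases smul_eq_zero.mp h with hr | hu'
    · exact ⟨hr, rfl⟩
    · exact absurd hu' hu
  · exfalso
    apply hna (-(r / s))
    have : s • a = -(r • u) := by
      rw [eq_neg_iff_add_eq_zero, add_comm]; exact h
    have := congrArg (fun z => s⁻¹ • z) this
    simp only [smul_smul, inv_mul_cancel₀ hs, one_smul] at this
    rw [this]
    rw [smul_neg, smul_smul]
    ext i
    simp [neg_smul, div_eq_mul_inv, mul_comm]

/-- If nonzero vectors satisfy `uᵀv + aᵀb = xᵀy` (as `ℓ × m` matrices of outer products),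
then the span of `u, a, x` in `F^ℓ` is one-dimensional or the span of `v, b, y` in `F^m` is
one-dimensional. -/
theorem rank_one_sum_span (K : Type*) [Field K] (ℓ m : ℕ)
    (u a x : Fin ℓ → K) (v b y : Fin m → K)
    (hu : u ≠ 0) (ha : a ≠ 0) (hx : x ≠ 0) (hv : v ≠ 0) (hb : b ≠ 0) (hy : y ≠ 0)
    (h : Matrix.vecMulVec u v + Matrix.vecMulVec a b = Matrix.vecMulVec x y) :
    Module.finrank K ↥(Submodule.span K {u, a, x}) = 1 ∨
      Module.finrank K ↥(Submodule.span K {v, b, y}) = 1 := by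
  have key : ∀ i j, u i * v j + a i * b j = x i * y j := by
    intro i j
    have := congrFun (congrFun h i) j
    simpa [Matrix.vecMulVec_apply, Matrix.add_apply] using this
  obtain ⟨j0, hj0⟩ : ∃ j0, y j0 ≠ 0 := Function.ne_iff.mp hy
  by_cases hc : ∃ c : K, a = c • u
  · -- a is a multiple of u; show x is too
    obtain ⟨c, rfl⟩ := hc
    left
    have hxu : x = ((v j0 + c * b j0) / y j0) • u := by
      funext i
      have hi := key i j0
      simp only [Pi.smul_apply, smul_eq_mul] at hi ⊢
      field_simp
      linear_combination -hi
    exact span_three_eq_one u u (c • u) x (by exact hu) ⟨1, (one_smul K u).symm⟩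
      ⟨c, rfl⟩ ⟨_, hxu⟩ (by left; rfl)
  · -- u and a are independent
    push_neg at hc
    right
    -- vector relation for each j
    have vecrel : ∀ j, (v j) • u + (b j) • a = (y j) • x := by
      intro j
      funext i
      have := key i j
      simp only [Pi.add_apply, Pi.smul_apply, smul_eq_mul]
      rw [mul_comm (v j), mul_comm (b j), mul_comm (y j)]
      exact this
    have hxform : x = (y j0)⁻¹ • ((v j0) • u + (b j0) • a) := by
      rw [vecrel j0, smul_smul, inv_mul_cancel₀ hj0, one_smul]
    have main : ∀ j, v j = (y j / y j0) * v j0 ∧ b j = (y j / y j0) * b j0 := by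
      intro j
      have hrel := vecrel j
      rw [hxform, smul_smul, smul_add, smul_smul, smul_smul] at hrel
      have hzero : (v j - y j * (y j0)⁻¹ * v j0) • u + (b j - y j * (y j0)⁻¹ * b j0) • a = 0 := by
        rw [sub_smul, sub_smul, sub_add_sub_comm, hrel, sub_self]
      obtain ⟨h1, h2⟩ := indep_aux hu hc hzero
      constructor
      · have := sub_eq_zero.mp h1; rw [this]; ring
      · have := sub_eq_zero.mp h2; rw [this]; ring
    have hvy : v = (v j0 / y j0) • y := by
      funext j
      have := (main j).1
      simp only [Pi.smul_apply, smul_eq_mul]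
      rw [this]; ring
    have hby : b = (b j0 / y j0) • y := by
      funext j
      have := (main j).2
      simp only [Pi.smul_apply, smul_eq_mul]
      rw [this]; ring
    exact span_three_eq_one y v b y hy ⟨_, hvy⟩ ⟨_, hby⟩ ⟨1, (one_smul K y).symm⟩
      (by right; right; rfl)
end

section
/- Let F be a field and let E be a finite-dimensional F-linear subspace of Mat_{ℓ×m}(F) such that every nonzero matrix in E has rank 1. Then dim E ≤ max(ℓ, m). -/
/-!
View the matrices as linear maps `f : V → W` of rank at most one. If `f`, `g` and `f + g` all have
rank at most one, then `f` and `g` have the same image or the same kernel: a vector `x` with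
`f x = 0 ≠ g x` forces `f + g` and `g` to have the same image line, which then contains the image
of `f = (f + g) - g`. Fixing a nonzero `A ∈ E`, it follows that either every map of `E` has image
in the line `range A`, so that `E` embeds into `Hom(V, range A)`, or every map of `E` vanishes on
`ker A`, so that `E` embeds into `Hom(V ⧸ ker A, W)`; both have dimension at most
`max (dim V) (dim W)`.
-/

open Matrix Module LinearMap Submodule

section RankOne

variable {K V W : Type*} [Field K] [AddCommGroup V] [Module K V] [AddCommGroup W] [Module K W]

namespace LinearMap

theorem ker_le_ker_of_not_range_le [FiniteDimensional K W] {f g : V →ₗ[K] W}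
    (hg : finrank K (range g) ≤ 1) (hfg : finrank K (range (f + g)) ≤ 1)
    (h : ¬ range f ≤ range g) : ker f ≤ ker g := by
  intro x hx
  by_contra hgx
  have hx' : (f + g) x = g x := by simp [mem_ker.mp hx]
  have line_eq {S : Submodule K W} (hS : finrank K S ≤ 1) (hxS : g x ∈ S) : K ∙ g x = S :=
    eq_of_le_of_finrank_le ((span_singleton_le_iff_mem _ _).mpr hxS)
      (hS.trans (finrank_span_singleton hgx).ge)
  have hsum : range (f + g) = range g :=
    (line_eq hfg (hx' ▸ mem_range_self _ x)).symm.trans (line_eq hg (mem_range_self g x))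
  refine h ?_
  rintro _ ⟨y, rfl⟩
  have : f y = (f + g) y - g y := by simp
  rw [this]
  exact sub_mem (hsum ▸ mem_range_self _ y) (mem_range_self g y)

theorem range_eq_or_ker_eq [FiniteDimensional K W] {f g : V →ₗ[K] W} (hf0 : f ≠ 0) (hg0 : g ≠ 0)
    (hf : finrank K (range f) ≤ 1) (hg : finrank K (range g) ≤ 1)
    (hfg : finrank K (range (f + g)) ≤ 1) : range f = range g ∨ ker f = ker g := by
  have not_le {f g : V →ₗ[K] W} (hf0 : f ≠ 0) (hg : finrank K (range g) ≤ 1)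
      (hne : range f ≠ range g) : ¬ range f ≤ range g := fun hle =>
    hne (eq_of_le_of_finrank_le hle (hg.trans (Nat.one_le_iff_ne_zero.mpr
      (fun h => hf0 (range_eq_bot.mp (Submodule.finrank_eq_zero.mp h))))))
  by_cases hne : range f = range g
  · exact Or.inl hne
  · refine Or.inr (le_antisymm ?_ ?_)
    · exact ker_le_ker_of_not_range_le hg hfg (not_le hf0 hg hne)
    · exact ker_le_ker_of_not_range_le hf (add_comm f g ▸ hfg) (not_le hg0 hf (Ne.symm hne))

end LinearMap

namespace Submodule

theorem finrank_le_of_forall_range_le [FiniteDimensional K V] [FiniteDimensional K W]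
    (E : Submodule K (V →ₗ[K] W)) (L : Submodule K W) (h : ∀ f ∈ E, range f ≤ L) :
    finrank K E ≤ finrank K V * finrank K L := by
  have hE : E ≤ range (LinearMap.compRight K L.subtype : (V →ₗ[K] L) →ₗ[K] V →ₗ[K] W) :=
    fun f hf => ⟨f.codRestrict L fun v => h f hf (mem_range_self f v), rfl⟩
  calc finrank K E ≤ finrank K (V →ₗ[K] L) := (finrank_mono hE).trans (finrank_range_le _)
    _ = finrank K V * finrank K L := finrank_linearMap K K V L

theorem finrank_le_of_forall_le_ker [FiniteDimensional K V] [FiniteDimensional K W]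
    (E : Submodule K (V →ₗ[K] W)) (N : Submodule K V) (h : ∀ f ∈ E, N ≤ ker f) :
    finrank K E ≤ finrank K (V ⧸ N) * finrank K W := by
  have hE : E ≤ range (LinearMap.lcomp K W N.mkQ) :=
    fun f hf => ⟨N.liftQ f (h f hf), N.liftQ_mkQ f (h f hf)⟩
  calc finrank K E ≤ finrank K (V ⧸ N →ₗ[K] W) := (finrank_mono hE).trans (finrank_range_le _)
    _ = finrank K (V ⧸ N) * finrank K W := finrank_linearMap K K (V ⧸ N) W

theorem forall_range_le_or_forall_ker_le [FiniteDimensional K W] (E : Submodule K (V →ₗ[K] W))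
    (hE : ∀ f ∈ E, finrank K (range f) ≤ 1) {A : V →ₗ[K] W} (hA : A ∈ E) (hA0 : A ≠ 0) :
    (∀ f ∈ E, range f ≤ range A) ∨ ∀ f ∈ E, ker A ≤ ker f := by
  by_contra! ⟨⟨B, hB, hBA⟩, ⟨f, hf, hAf⟩⟩
  have dichotomy {g h : V →ₗ[K] W} (hg : g ∈ E) (hh : h ∈ E) (hg0 : g ≠ 0) (hh0 : h ≠ 0) :=
    range_eq_or_ker_eq hg0 hh0 (hE g hg) (hE h hh) (hE _ (E.add_mem hg hh))
  have hB0 : B ≠ 0 := by rintro rfl; simp at hBA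
  have hf0 : f ≠ 0 := by rintro rfl; simp at hAf
  have hAB : ker A = ker B := (dichotomy hA hB hA0 hB0).resolve_left fun h => hBA h.ge
  have hAf' : range A = range f := (dichotomy hA hf hA0 hf0).resolve_right fun h => hAf h.le
  rcases dichotomy hB hf hB0 hf0 with h | h
  · exact hBA (h.trans hAf'.symm).le
  · exact hAf (hAB.trans h).le

theorem finrank_le_max_of_forall_finrank_range_le_one [FiniteDimensional K V]
    [FiniteDimensional K W] (E : Submodule K (V →ₗ[K] W))
    (hE : ∀ f ∈ E, finrank K (range f) ≤ 1) :
    finrank K E ≤ max (finrank K V) (finrank K W) := by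
  rcases eq_or_ne E ⊥ with rfl | hE0
  · simp
  obtain ⟨A, hA, hA0⟩ := exists_mem_ne_zero_of_ne_bot hE0
  rcases forall_range_le_or_forall_ker_le E hE hA hA0 with h | h
  · calc finrank K E ≤ finrank K V * finrank K (range A) := finrank_le_of_forall_range_le E _ h
      _ ≤ finrank K V * 1 := Nat.mul_le_mul_left _ (hE A hA)
      _ ≤ max (finrank K V) (finrank K W) := by simp
  · calc finrank K E ≤ finrank K (V ⧸ ker A) * finrank K W := finrank_le_of_forall_le_ker E _ h
      _ = finrank K (range A) * finrank K W := by rw [(quotKerEquivRange A).finrank_eq]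
      _ ≤ 1 * finrank K W := Nat.mul_le_mul_right _ (hE A hA)
      _ ≤ max (finrank K V) (finrank K W) := by simp

end Submodule

end RankOne

/-- A linear space of `ℓ × m` matrices over a field in which every nonzero matrix has rank one
has dimension at most `max ℓ m`. -/
theorem rank_one_subspace_dim_le (K : Type*) [Field K] (ℓ m : ℕ)
    (E : Submodule K (Matrix (Fin ℓ) (Fin m) K))
    (hE : ∀ M ∈ E, M ≠ 0 → Matrix.rank M = 1) :
    Module.finrank K ↥E ≤ max ℓ m := by
  have hE' : ∀ f ∈ E.map (toLin' : Matrix (Fin ℓ) (Fin m) K ≃ₗ[K] _).toLinearMap,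
      finrank K (range f) ≤ 1 := by
    rintro _ ⟨M, hM, rfl⟩
    rcases eq_or_ne M 0 with rfl | hM0
    · exact rank_zero.trans_le zero_le_one
    · exact (hE M hM hM0).le
  calc finrank K E = finrank K (E.map (toLin' : Matrix (Fin ℓ) (Fin m) K ≃ₗ[K] _).toLinearMap) :=
        (LinearEquiv.finrank_map_eq _ _).symm
    _ ≤ max (finrank K (Fin m → K)) (finrank K (Fin ℓ → K)) :=
        finrank_le_max_of_forall_finrank_range_le_one _ hE'
    _ = max ℓ m := by simp [max_comm]
end

section
/- Let q be a prime power, ℓ ≤ m be positive integers, and let D be an r-dimensional F_q-linear subspace of Mat_{ℓ×m}(F_q) with r > m. Then D contains at most q^{r−1} + q² − q − 1 matrices of rank 1, and consequently D contains at least (q^{r−1} − q)(q − 1) matrices of rank at least 2. -/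
open Matrix Module Finset

set_option linter.unusedSectionVars false
set_option maxHeartbeats 1600000
set_option synthInstance.maxHeartbeats 400000

namespace CountRankOne

variable {K : Type*} [Field K] [Fintype K] {l m : ℕ}

/-- `vecMulVec u ·` as a linear map. -/
def vmvLin (u : Fin l → K) : (Fin m → K) →ₗ[K] Matrix (Fin l) (Fin m) K where
  toFun v := vecMulVec u v
  map_add' x y := by ext i j; simp [vecMulVec_apply, mul_add]
  map_smul' c x := by ext i j; simp [vecMulVec_apply]; ring

@[simp] lemma vmvLin_apply (u : Fin l → K) (v : Fin m → K) : vmvLin u v = vecMulVec u v := rfl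

lemma vmv_smul_left (c : K) (a : Fin l → K) (b : Fin m → K) :
    vecMulVec (c • a) b = c • vecMulVec a b := by
  ext i j; simp [vecMulVec_apply, mul_assoc]

lemma vmv_smul_right (c : K) (a : Fin l → K) (b : Fin m → K) :
    vecMulVec a (c • b) = c • vecMulVec a b := by
  ext i j; simp [vecMulVec_apply]; ring

lemma exists_ne_zero {n : ℕ} {u : Fin n → K} (hu : u ≠ 0) : ∃ i, u i ≠ 0 := by
  by_contra hc; push_neg at hc; exact hu (funext fun i => hc i)

lemma vmvLin_injective {u : Fin l → K} (hu : u ≠ 0) :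
    Function.Injective (vmvLin (m := m) u) := by
  intro w w' h
  obtain ⟨i, hi⟩ := exists_ne_zero hu
  funext j
  have h2 : vecMulVec u w i j = vecMulVec u w' i j := by
    rw [show vecMulVec u w = vecMulVec u w' from h]
  rw [vecMulVec_apply, vecMulVec_apply] at h2
  exact mul_left_cancel₀ hi h2

lemma rank_eq_zero_iff' {M : Matrix (Fin l) (Fin m) K} : M.rank = 0 ↔ M = 0 := by
  constructor
  · intro h
    rw [Matrix.rank, Submodule.finrank_eq_zero] at h
    have h0 : M.mulVecLin = 0 := LinearMap.range_eq_bot.mp h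
    ext i j
    have h1 := LinearMap.congr_fun h0 (Pi.single j 1)
    have h2 := congrFun h1 i
    simpa [Matrix.mulVecLin_apply, Matrix.mulVec_single] using h2
  · rintro rfl; simp

lemma rank_one_decomp {M : Matrix (Fin l) (Fin m) K} (h : M.rank = 1) :
    ∃ a b, a ≠ 0 ∧ b ≠ 0 ∧ M = vecMulVec a b := by
  have h' := h
  rw [Matrix.rank] at h'
  obtain ⟨v, hv0, hv⟩ := finrank_eq_one_iff'.mp h'
  have hva : (v : Fin l → K) ≠ 0 := by
    simpa [Submodule.coe_eq_zero] using hv0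
  have hmem : ∀ j, M *ᵥ Pi.single j 1 ∈ LinearMap.range M.mulVecLin := by
    intro j; exact ⟨Pi.single j 1, by simp [Matrix.mulVecLin_apply]⟩
  choose c hc using fun j => hv ⟨M *ᵥ Pi.single j 1, hmem j⟩
  have hM : M = vecMulVec (v : Fin l → K) c := by
    ext i j
    have h1 : ((c j • v : LinearMap.range M.mulVecLin) : Fin l → K) i = M i j := by
      rw [hc j]; simp [Matrix.mulVec_single]
    simp only [Submodule.coe_smul, Pi.smul_apply, smul_eq_mul] at h1
    rw [vecMulVec_apply, mul_comm]
    exact h1.symm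
  refine ⟨(v : Fin l → K), c, hva, ?_, hM⟩
  rintro rfl
  have hM0 : M = 0 := by rw [hM]; ext i j; simp [vecMulVec_apply]
  rw [hM0] at h; simp at h

/-- Key linear-algebra lemma: if `a bᵀ + u wᵀ` has rank one (i.e. equals `a' b'ᵀ`),
with `a ≠ 0`, `b ≠ 0` and `u` not a multiple of `a`, then `w` is a multiple of `b`. -/
lemma key_w_in_span {a u a' : Fin l → K} {b w b' : Fin m → K}
    (ha : a ≠ 0) (hu : ∀ c : K, u ≠ c • a) (hb : b ≠ 0)
    (heq : vecMulVec a b + vecMulVec u w = vecMulVec a' b') :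
    ∃ c : K, w = c • b := by
  set S : Submodule K (Fin m → K) := Submodule.span K {b'} with hS
  set π : (Fin m → K) →ₗ[K] _ := S.mkQ with hπ
  have hb'0 : π b' = 0 := by
    rw [hπ, Submodule.mkQ_apply, Submodule.Quotient.mk_eq_zero]
    exact Submodule.mem_span_singleton_self b'
  have hrow : ∀ i, a i • π b + u i • π w = 0 := by
    intro i
    have hrow' : a i • b + u i • w = a' i • b' := by
      funext j
      have h3 := congrFun (congrFun heq i) j
      simpa [vecMulVec_apply, Pi.add_apply, mul_comm] using h3
    have h4 : π (a i • b + u i • w) = π (a' i • b') := by rw [hrow']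
    rw [map_add, LinearMap.map_smul, LinearMap.map_smul, LinearMap.map_smul, hb'0,
      smul_zero] at h4
    exact h4
  by_cases hQb : π b = 0
  · have hbS : b ∈ S := by rwa [hπ, Submodule.mkQ_apply, Submodule.Quotient.mk_eq_zero] at hQb
    obtain ⟨β, hβ⟩ := Submodule.mem_span_singleton.mp hbS
    have hβ0 : β ≠ 0 := by rintro rfl; rw [← hβ] at hb; simp at hb
    have hu0 : u ≠ 0 := fun h0 => hu 0 (by simpa using h0)
    obtain ⟨i, hi⟩ := exists_ne_zero hu0
    have h5 : u i • π w = 0 := by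
      have h6 := hrow i; rwa [hQb, smul_zero, zero_add] at h6
    have hw0 : π w = 0 := by
      rcases smul_eq_zero.mp h5 with h | h
      · exact absurd h hi
      · exact h
    have hwS : w ∈ S := by rwa [hπ, Submodule.mkQ_apply, Submodule.Quotient.mk_eq_zero] at hw0
    obtain ⟨δ, hδ⟩ := Submodule.mem_span_singleton.mp hwS
    refine ⟨δ * β⁻¹, ?_⟩
    rw [← hδ, ← hβ, smul_smul]
    congr 1
    field_simp
  · obtain ⟨i, hi⟩ := exists_ne_zero ha
    have hui : u i ≠ 0 := by
      intro h0
      have h6 := hrow i; rw [h0, zero_smul, add_zero] at h6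
      rcases smul_eq_zero.mp h6 with h | h
      · exact hi h
      · exact hQb h
    have hwQ : π w ≠ 0 := by
      intro h0
      have h6 := hrow i; rw [h0, smul_zero, add_zero] at h6
      rcases smul_eq_zero.mp h6 with h | h
      · exact hi h
      · exact hQb h
    set γ : K := -((a i)⁻¹ * u i) with hγ
    have hbw : π b = γ • π w := by
      have h1' : a i • π b = -(u i • π w) := eq_neg_of_add_eq_zero_left (hrow i)
      have h3 : (a i)⁻¹ • (a i • π b) = (a i)⁻¹ • (-(u i • π w)) := by rw [h1']
      rw [smul_smul, inv_mul_cancel₀ hi, one_smul, smul_neg, smul_smul] at h3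
      rw [h3, hγ, neg_smul]
    exfalso
    apply hu (-γ)
    funext j
    have h7 := hrow j
    rw [hbw, smul_smul, ← add_smul] at h7
    have h8 : a j * γ + u j = 0 := by
      rcases smul_eq_zero.mp h7 with h | h
      · exact h
      · exact absurd h hwQ
    have h9 : u j = -γ * a j := by linear_combination h8
    simpa [Pi.smul_apply, smul_eq_mul] using h9

/-- In a nonzero coset of `E = u ⊗ W` containing a rank-one matrix `a bᵀ`, every rank-one
matrix has the form `a bᵀ + u (c b)ᵀ`. -/
lemma coset_param (D : Submodule K (Matrix (Fin l) (Fin m) K)) {u : Fin l → K} (hu : u ≠ 0)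
    {A : Matrix (Fin l) (Fin m) K} {a : Fin l → K} {b : Fin m → K}
    (hAab : A = vecMulVec a b) (ha : a ≠ 0) (hb : b ≠ 0) (hAD : A ∈ D)
    (hAE : A ∉ (D.comap (vmvLin u)).map (vmvLin (m := m) u))
    {M : Matrix (Fin l) (Fin m) K} (h1 : M.rank = 1)
    (hME : M - A ∈ (D.comap (vmvLin u)).map (vmvLin (m := m) u)) :
    ∃ c : K, M = A + vecMulVec u (c • b) := by
  obtain ⟨w, hwW, hwE⟩ := hME
  obtain ⟨a', b', _, _, hM⟩ := rank_one_decomp h1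
  have hwE' : vecMulVec u w = M - A := hwE
  have heq : vecMulVec a b + vecMulVec u w = vecMulVec a' b' := by
    rw [hwE', ← hAab, ← hM]; abel
  have hu' : ∀ c : K, u ≠ c • a := by
    intro c hc
    have hc0 : c ≠ 0 := by rintro rfl; rw [zero_smul] at hc; exact hu hc
    apply hAE
    have key : vmvLin u (c⁻¹ • b) = A := by
      rw [vmvLin_apply, vmv_smul_right, hc, vmv_smul_left, ← hAab, smul_smul,
        inv_mul_cancel₀ hc0, one_smul]
    refine ⟨c⁻¹ • b, ?_, key⟩
    simp only [SetLike.mem_coe, Submodule.mem_comap, key]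
    exact hAD
  obtain ⟨c, hcw⟩ := key_w_in_span ha hu' hb heq
  refine ⟨c, ?_⟩
  rw [← hcw, hwE']
  abel

lemma arith_main {q d r : ℕ} (hq : 2 ≤ q) (hd2 : 2 ≤ d) (hdr : d + 1 ≤ r) :
    q ^ d - 1 + q * (q ^ (r - d) - 1) ≤ q ^ (r - 1) + q ^ 2 - q - 1 := by
  have h1 : q ^ d + q * q ^ (r - d) ≤ q ^ (r - 1) + q ^ 2 := by
    have e1 : q ^ d = q ^ (d - 2) * q ^ 2 := by rw [← pow_add]; congr 1; omega
    have e2 : q * q ^ (r - d) = q ^ (r + 1 - d) := by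
      rw [← pow_succ']; congr 1; omega
    have e3 : q ^ (r - 1) = q ^ (d - 2) * q ^ (r + 1 - d) := by rw [← pow_add]; congr 1; omega
    have hy : q ^ 2 ≤ q ^ (r + 1 - d) := Nat.pow_le_pow_right (by omega) (by omega)
    rw [e1, e2, e3]
    obtain ⟨x', hx'⟩ : ∃ x', q ^ (d - 2) = x' + 1 :=
      ⟨q ^ (d - 2) - 1, by have := Nat.one_le_pow (d - 2) q (by omega); omega⟩
    rw [hx']
    have := Nat.mul_le_mul_left x' hy
    nlinarith
  have h2 : 1 ≤ q ^ d := Nat.one_le_pow _ _ (by omega)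
  have h4 : q + 1 ≤ q ^ 2 := by nlinarith
  have h5 : q ^ 2 ≤ q ^ (r - 1) := Nat.pow_le_pow_right (by omega) (by omega)
  obtain ⟨B', hB⟩ : ∃ B', q ^ (r - d) = B' + 1 :=
    ⟨q ^ (r - d) - 1, by have := Nat.one_le_pow (r - d) q (by omega); omega⟩
  rw [hB] at h1 ⊢
  rw [Nat.mul_add, Nat.mul_one] at h1
  simp only [Nat.add_sub_cancel]
  omega
lemma arith_two {q C N R : ℕ} (hq : 2 ≤ q) (hC : q * q ≤ C) (h1 : q * C ≤ 1 + N + R)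
    (hN : N ≤ C + q ^ 2 - q - 1) : (C - q) * (q - 1) ≤ R := by
  have hsq : q ^ 2 = q * q := sq q
  rw [hsq] at hN
  have hqC : q ≤ C := le_trans (by nlinarith) hC
  obtain ⟨C', rfl⟩ : ∃ C', C = C' + q := ⟨C - q, by omega⟩
  obtain ⟨q', rfl⟩ : ∃ q', q = q' + 1 := ⟨q - 1, by omega⟩
  simp only [Nat.add_sub_cancel]
  have hQ1 : 1 ≤ (q' + 1) * (q' + 1) := by nlinarith
  generalize hQ : (q' + 1) * (q' + 1) = Q at hN hQ1
  have hN' : N + 1 ≤ C' + Q := by omega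
  nlinarith [h1, hN', hQ]

end CountRankOne

open CountRankOne

/-- An `r`-dimensional linear space of `ℓ × m` matrices over `F_q` with `r > m ≥ ℓ` contains
at most `q ^ (r - 1) + q ^ 2 - q - 1` matrices of rank one, and hence at least
`(q ^ (r - 1) - q) * (q - 1)` matrices of rank at least two. -/
theorem count_rank_one_in_subspace (K : Type*) [Field K] [Fintype K] (q ℓ m r : ℕ)
    (hq : Fintype.card K = q) (hℓ : 0 < ℓ) (hℓm : ℓ ≤ m)
    (D : Submodule K (Matrix (Fin ℓ) (Fin m) K)) (hD : Module.finrank K ↥D = r)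
    (hr : m < r) :
    Nat.card {M : Matrix (Fin ℓ) (Fin m) K // M ∈ D ∧ M.rank = 1} ≤
      q ^ (r - 1) + q ^ 2 - q - 1 ∧
    (q ^ (r - 1) - q) * (q - 1) ≤
      Nat.card {M : Matrix (Fin ℓ) (Fin m) K // M ∈ D ∧ 2 ≤ M.rank} := by
  classical
  subst hq
  set q := Fintype.card K with hqdef
  have hq2 : 2 ≤ q := Fintype.one_lt_card
  set V := Matrix (Fin ℓ) (Fin m) K with hV
  -- m ≥ 2
  have hrlm : r ≤ ℓ * m := by
    rw [← hD]
    have h := Submodule.finrank_le D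
    rwa [Module.finrank_matrix, Module.finrank_self, Fintype.card_fin, Fintype.card_fin,
      mul_one] at h
  have hm2 : 2 ≤ m := by
    rcases Nat.lt_or_ge m 2 with hm | hm
    · exfalso
      have hm1 : m = 1 := by omega
      have hl1 : ℓ = 1 := by omega
      rw [hm1, hl1] at hrlm
      omega
    · exact hm
  -- Finset versions of the sets to count
  set S1 : Finset V := univ.filter (fun M => M ∈ D ∧ M.rank = 1) with hS1
  set S2 : Finset V := univ.filter (fun M => M ∈ D ∧ 2 ≤ M.rank) with hS2
  have hNat1 : Nat.card {M : V // M ∈ D ∧ M.rank = 1} = S1.card := by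
    rw [Nat.card_eq_fintype_card, Fintype.card_subtype]
  have hNat2 : Nat.card {M : V // M ∈ D ∧ 2 ≤ M.rank} = S2.card := by
    rw [Nat.card_eq_fintype_card, Fintype.card_subtype]
  -- card of submodule-filters
  have card_filter_mem : ∀ (p : Submodule K V),
      (univ.filter (· ∈ p)).card = q ^ (finrank K p) := by
    intro p
    rw [← Fintype.card_subtype]
    exact card_eq_pow_finrank
  -- Main bound on S1
  have key : S1.card ≤ q ^ (r - 1) + q ^ 2 - q - 1 := by
    by_cases hcase : ∃ u : Fin ℓ → K, u ≠ 0 ∧ 2 ≤ finrank K (D.comap (vmvLin u))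
    · -- Case A
      obtain ⟨u, hu, hd2⟩ := hcase
      set W : Submodule K (Fin m → K) := D.comap (vmvLin u) with hW
      set E : Submodule K V := W.map (vmvLin (m := m) u) with hE
      have hED : E ≤ D := Submodule.map_comap_le _ _
      set d := finrank K W with hd
      have hdm : d ≤ m := by
        have h := Submodule.finrank_le W
        rwa [Module.finrank_pi, Fintype.card_fin] at h
      have hEfr : finrank K E = d := by
        rw [hE, hd]
        exact ((Submodule.equivMapOfInjective _ (vmvLin_injective hu) W).finrank_eq).symm
      set f : D →ₗ[K] (V ⧸ E) := E.mkQ.comp D.subtype with hf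
      have hker : finrank K (LinearMap.ker f) = d := by
        have hk : LinearMap.ker f = E.comap D.subtype := by
          rw [hf, LinearMap.ker_comp, Submodule.ker_mkQ]
        rw [hk, (Submodule.comapSubtypeEquivOfLe hED).finrank_eq, hEfr]
      have hrn := LinearMap.finrank_range_add_finrank_ker f
      rw [hD, hker] at hrn
      have hrange : finrank K (LinearMap.range f) = r - d := by omega
      letI : Fintype (V ⧸ E) := Fintype.ofFinite _
      -- split S1
      set S1E := S1.filter (· ∈ E) with hS1E
      set S1O := S1.filter (fun M => ¬ M ∈ E) with hS1O
      have hsplit : S1E.card + S1O.card = S1.card :=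
        Finset.card_filter_add_card_filter_not _
      have hc1 : S1E.card ≤ q ^ d - 1 := by
        have hsub : S1E ⊆ (univ.filter (· ∈ E)).erase 0 := by
          intro M hM
          simp only [hS1E, hS1, mem_filter, mem_univ, true_and] at hM
          rw [mem_erase, mem_filter]
          refine ⟨?_, mem_univ M, hM.2⟩
          intro h0
          rw [h0] at hM
          have := hM.1.2
          simp at this
        have := Finset.card_le_card hsub
        rwa [Finset.card_erase_of_mem (by
          rw [mem_filter]; exact ⟨mem_univ 0, zero_mem E⟩), card_filter_mem E, hEfr] at this
      have hc2 : S1O.card ≤ q * (q ^ (r - d) - 1) := by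
        set t : Finset (V ⧸ E) := (univ.filter (· ∈ LinearMap.range f)).erase 0 with ht
        have hfc : (univ.filter (· ∈ LinearMap.range f)).card = q ^ (r - d) := by
          have h1 : Nat.card ↥(LinearMap.range f) = q ^ (r - d) := by
            rw [Nat.card_eq_fintype_card, ← hrange]
            exact card_eq_pow_finrank
          rw [← h1, Nat.card_eq_fintype_card]
          exact (Fintype.card_of_subtype _ (fun x => by simp)).symm
        have htcard : t.card = q ^ (r - d) - 1 := by
          rw [ht, Finset.card_erase_of_mem (by
            rw [mem_filter]; exact ⟨mem_univ 0, zero_mem _⟩), hfc]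
        have hmaps : ∀ M ∈ S1O, (Submodule.Quotient.mk (p := E) M) ∈ t := by
          intro M hM
          simp only [hS1O, hS1, mem_filter, mem_univ, true_and] at hM
          rw [ht, mem_erase, mem_filter]
          refine ⟨?_, mem_univ _, ⟨⟨M, hM.1.1⟩, rfl⟩⟩
          rw [Ne, Submodule.Quotient.mk_eq_zero]
          exact hM.2
        have hfib : ∀ c ∈ t, (S1O.filter
            (fun M => Submodule.Quotient.mk (p := E) M = c)).card ≤ q := by
          intro cl hcl
          set F := S1O.filter (fun M => Submodule.Quotient.mk (p := E) M = cl) with hF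
          rcases F.eq_empty_or_nonempty with hFe | ⟨A, hA⟩
          · rw [hFe]; simp
          · have hA' := hA
            simp only [hF, hS1O, hS1, mem_filter, mem_univ, true_and] at hA'
            obtain ⟨⟨⟨hAD, hA1⟩, hAE⟩, hAcl⟩ := hA'
            obtain ⟨a, b, ha, hb, hAab⟩ := rank_one_decomp hA1
            have hFsub : F ⊆ Finset.image (fun c : K => A + vecMulVec u (c • b)) univ := by
              intro M hM
              simp only [hF, hS1O, hS1, mem_filter, mem_univ, true_and] at hM
              obtain ⟨⟨⟨hMD, hM1⟩, hME⟩, hMcl⟩ := hM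
              have hMA : M - A ∈ E := by
                rw [← Submodule.Quotient.eq]
                rw [hMcl, hAcl]
              obtain ⟨c, hc⟩ := coset_param D hu hAab ha hb hAD hAE hM1 hMA
              exact Finset.mem_image.mpr ⟨c, mem_univ c, hc.symm⟩
            calc F.card ≤ _ := Finset.card_le_card hFsub
              _ ≤ (univ : Finset K).card := Finset.card_image_le
              _ = q := Finset.card_univ
        have := Finset.card_le_mul_card_image_of_maps_to hmaps q hfib
        rwa [htcard] at this
      have harith := arith_main hq2 hd2 (show d + 1 ≤ r by omega)
      omega
    · -- Case B
      push_neg at hcase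
      set P : Finset ((Fin ℓ → K) × (Fin m → K)) :=
        univ.filter (fun p => p.1 ≠ 0 ∧ p.2 ≠ 0 ∧ vecMulVec p.1 p.2 ∈ D) with hP
      -- Step 1 : S1.card * (q - 1) ≤ P.card
      have hdec : ∀ M : V, M ∈ S1 → ∃ a b, a ≠ 0 ∧ b ≠ 0 ∧ M = vecMulVec a b := by
        intro M hM
        simp only [hS1, mem_filter] at hM
        exact rank_one_decomp hM.2.2
      choose! av bv hav hbv hMv using hdec
      have hstep1 : S1.card * (q - 1) ≤ P.card := by
        set T : Finset K := univ.erase 0 with hT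
        set g : V × K → (Fin ℓ → K) × (Fin m → K) :=
          fun p => (p.2 • av p.1, p.2⁻¹ • bv p.1) with hg
        have hback : ∀ M ∈ S1, ∀ c : K, c ≠ 0 →
            vecMulVec (c • av M) (c⁻¹ • bv M) = M := by
          intro M hM c hc
          rw [vmv_smul_right, vmv_smul_left, smul_smul, inv_mul_cancel₀ hc, one_smul]
          exact (hMv M hM).symm
        have hmaps : ∀ p ∈ S1 ×ˢ T, g p ∈ P := by
          rintro ⟨M, c⟩ hp
          rw [Finset.mem_product] at hp
          obtain ⟨hM, hc⟩ := hp
          have hc0 : c ≠ 0 := by simpa [hT] using hc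
          simp only [hP, hg, mem_filter, mem_univ, true_and]
          refine ⟨smul_ne_zero hc0 (hav M hM), smul_ne_zero (inv_ne_zero hc0) (hbv M hM), ?_⟩
          rw [hback M hM c hc0]
          have := hM
          simp only [hS1, mem_filter] at this
          exact this.2.1
        have hinj : Set.InjOn g (S1 ×ˢ T : Finset (V × K)) := by
          rintro ⟨M, c⟩ hp ⟨M', c'⟩ hp' hgeq
          rw [Finset.coe_product] at hp hp'
          obtain ⟨hM, hc⟩ := hp
          obtain ⟨hM', hc'⟩ := hp'
          have hM'' : M ∈ S1 := by simpa using hM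
          have hM''' : M' ∈ S1 := by simpa using hM'
          have hc0 : c ≠ 0 := by simpa [hT] using hc
          have hc0' : c' ≠ 0 := by simpa [hT] using hc'
          have h1 : c • av M = c' • av M' := congrArg Prod.fst hgeq
          have h2 : c⁻¹ • bv M = c'⁻¹ • bv M' := congrArg Prod.snd hgeq
          have hMM : M = M' := by
            rw [← hback M hM'' c hc0, ← hback M' hM''' c' hc0', h1, h2]
          subst hMM
          have : c = c' := by
            obtain ⟨i, hi⟩ := exists_ne_zero (hav M hM'')
            have := congrFun h1 i
            simp only [Pi.smul_apply, smul_eq_mul] at this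
            exact mul_right_cancel₀ hi this
          rw [this]
        have := Finset.card_le_card_of_injOn g hmaps hinj
        rwa [Finset.card_product, hT, Finset.card_erase_of_mem (mem_univ 0),
          Finset.card_univ] at this
      -- Step 2 : P.card ≤ (q - 1) * (q ^ ℓ - 1)
      have hstep2 : P.card ≤ (q - 1) * (q ^ ℓ - 1) := by
        set t : Finset (Fin ℓ → K) := univ.erase 0 with ht
        have htc : t.card = q ^ ℓ - 1 := by
          rw [ht, Finset.card_erase_of_mem (mem_univ 0), Finset.card_univ, Fintype.card_fun,
            Fintype.card_fin]
        have hmaps : ∀ p ∈ P, p.1 ∈ t := by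
          rintro ⟨u, v⟩ hp
          simp only [hP, mem_filter] at hp
          rw [ht, mem_erase]
          exact ⟨hp.2.1, mem_univ _⟩
        have hfib : ∀ u ∈ t, (P.filter (fun p => p.1 = u)).card ≤ q - 1 := by
          intro u hut
          have hu : u ≠ 0 := by
            rw [ht, mem_erase] at hut; exact hut.1
          have hW1 : finrank K (D.comap (vmvLin u)) ≤ 1 := by
            have := hcase u hu
            omega
          set tgt : Finset (Fin m → K) :=
            (univ.filter (· ∈ D.comap (vmvLin u))).erase 0 with htgt
          have htgtc : tgt.card ≤ q - 1 := by
            rw [htgt, Finset.card_erase_of_mem (by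
              rw [mem_filter]; exact ⟨mem_univ 0, zero_mem _⟩)]
            have h1 : (univ.filter (· ∈ D.comap (vmvLin u))).card
                = q ^ (finrank K (D.comap (vmvLin (m := m) u))) := by
              rw [← Fintype.card_subtype]; exact card_eq_pow_finrank
            have h2 : q ^ (finrank K (D.comap (vmvLin (m := m) u))) ≤ q ^ 1 :=
              Nat.pow_le_pow_right (by omega) hW1
            rw [pow_one] at h2
            omega
          have hinj : Set.InjOn (fun p : (Fin ℓ → K) × (Fin m → K) => p.2)
              (P.filter (fun p => p.1 = u) : Finset _) := by
            rintro ⟨u1, v1⟩ hp1 ⟨u2, v2⟩ hp2 h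
            simp only [Finset.coe_filter, Set.mem_setOf_eq] at hp1 hp2
            simp only at h
            rw [Prod.ext_iff]
            exact ⟨hp1.2.trans hp2.2.symm, h⟩
          have hmaps2 : ∀ p ∈ P.filter (fun p => p.1 = u), p.2 ∈ tgt := by
            rintro ⟨u1, v1⟩ hp
            simp only [hP, mem_filter] at hp
            obtain ⟨⟨_, h1, h2, h3⟩, h4⟩ := hp
            have h4' : u1 = u := h4
            subst h4'
            rw [htgt, mem_erase, mem_filter]
            exact ⟨h2, mem_univ _, by rwa [Submodule.mem_comap, vmvLin_apply]⟩
          have := Finset.card_le_card_of_injOn _ hmaps2 hinj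
          omega
        have hfin := Finset.card_le_mul_card_image_of_maps_to hmaps (q - 1) hfib
        rwa [htc] at hfin
      -- conclude case B
      have hS1le : S1.card ≤ q ^ ℓ - 1 := by
        have hq1 : 0 < q - 1 := by omega
        have := le_trans hstep1 hstep2
        rw [mul_comm (q - 1) _] at this
        exact Nat.le_of_mul_le_mul_right this hq1
      have hpow : q ^ ℓ ≤ q ^ (r - 1) := Nat.pow_le_pow_right (by omega) (by omega)
      have h4 : q + 1 ≤ q ^ 2 := by nlinarith
      have h5 : 1 ≤ q ^ ℓ := Nat.one_le_pow _ _ (by omega)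
      omega
  refine ⟨by rw [hNat1]; exact key, ?_⟩
  -- Part 2
  rw [hNat2]
  set Dfin : Finset V := univ.filter (· ∈ D) with hDfin
  have hDcard : Dfin.card = q ^ r := by
    rw [hDfin, card_filter_mem D, hD]
  have hsub : Dfin ⊆ insert 0 (S1 ∪ S2) := by
    intro M hM
    simp only [hDfin, mem_filter] at hM
    rcases Nat.lt_or_ge M.rank 1 with h0 | h1
    · have : M.rank = 0 := by omega
      rw [Finset.mem_insert]
      exact Or.inl (rank_eq_zero_iff'.mp this)
    · rcases Nat.lt_or_ge M.rank 2 with hh | hh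
      · have : M.rank = 1 := by omega
        rw [Finset.mem_insert, Finset.mem_union]
        exact Or.inr (Or.inl (by rw [hS1, mem_filter]; exact ⟨mem_univ _, hM.2, this⟩))
      · rw [Finset.mem_insert, Finset.mem_union]
        exact Or.inr (Or.inr (by rw [hS2, mem_filter]; exact ⟨mem_univ _, hM.2, hh⟩))
  have hcount : q ^ r ≤ 1 + (S1.card + S2.card) := by
    calc q ^ r = Dfin.card := hDcard.symm
      _ ≤ (insert 0 (S1 ∪ S2)).card := Finset.card_le_card hsub
      _ ≤ 1 + (S1 ∪ S2).card := by have := Finset.card_insert_le (0 : V) (S1 ∪ S2); omega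
      _ ≤ 1 + (S1.card + S2.card) := by
          have := Finset.card_union_le S1 S2; omega
  have hqr : q ^ r = q * q ^ (r - 1) := by
    rw [← pow_succ']; congr 1; omega
  have hC : q * q ≤ q ^ (r - 1) := by
    have : q ^ 2 ≤ q ^ (r - 1) := Nat.pow_le_pow_right (by omega) (by omega)
    rwa [sq] at this
  exact arith_two hq2 hC (by omega) key
end
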